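/- Let d ≥ 1, let A, B, C be fixed d×d real matrices, and let M be a d×d standard real Gaussian matrix (i.i.d. entries of mean 0 and variance 1). Then, entrywise, E[ M A Mᵀ B M C Mᵀ ] = trace(A) trace(C) · B + trace(AC) trace(B) · I + trace(ACᵀ) · Bᵀ. -/

import Mathlib

open MeasureTheory ProbabilityTheory Matrix

/-- The law of a `d × d` standard real Gaussian matrix: i.i.d. entries, each real Gaussian of
mean `0` and variance `1`. -/
noncomputable def realGaussianMat (d : ℕ) : Measure (Fin d × Fin d → ℝ) :=
  Measure.pi fun _ => gaussianReal 0 1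

/-- The real Gaussian matrix with entries `m(a,b) = ω(a,b)`. -/
def rmat {d : ℕ} (ω : Fin d × Fin d → ℝ) : Matrix (Fin d) (Fin d) ℝ :=
  Matrix.of fun a b => ω (a, b)

/-!
Expanding the entry as a sum over six indices, each term is a product of fixed matrix entries
and of four entries of `M`. By Isserlis' (Wick's) theorem the expectation of a product of four
independent standard Gaussians is the sum over the three pairings of the four factors of the
products of Kronecker deltas; this only needs the moments `1, 0, 1, 0, 3` of `N(0, 1)`, read off
from the derivatives of its moment generating function `exp (t ^ 2 / 2)`. Each of the three
pairings then contracts the six indices to one of the three terms on the right-hand side.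
-/

open Real

lemma zero_mem_interior_integrableExpSet_id_gaussianReal (μ : ℝ) (v : NNReal) :
    0 ∈ interior (integrableExpSet id (gaussianReal μ v)) := by
  simp [integrableExpSet_id_gaussianReal]

lemma integrable_pow_gaussianReal (μ : ℝ) (v : NNReal) (n : ℕ) :
    Integrable (fun x : ℝ => x ^ n) (gaussianReal μ v) :=
  integrable_pow_of_mem_interior_integrableExpSet
    (zero_mem_interior_integrableExpSet_id_gaussianReal μ v) n

lemma integral_pow_gaussianReal_eq_iteratedDeriv (n : ℕ) :
    ∫ x, x ^ n ∂gaussianReal 0 1 = iteratedDeriv n (fun t => exp (t ^ 2 / 2)) 0 := by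
  have h := iteratedDeriv_mgf_zero (zero_mem_interior_integrableExpSet_id_gaussianReal 0 1) n
  simp only [mgf_id_gaussianReal] at h
  simpa using h.symm

lemma deriv_mul_exp_half_sq {p p' : ℝ → ℝ} (hp : ∀ t, HasDerivAt p (p' t) t) :
    deriv (fun t => p t * exp (t ^ 2 / 2)) = fun t => (p' t + t * p t) * exp (t ^ 2 / 2) := by
  ext t
  rw [((hp t).fun_mul ((hasDerivAt_pow 2 t).div_const 2).exp).deriv]
  ring

lemma iteratedDeriv_one_exp_half_sq :
    iteratedDeriv 1 (fun t => exp (t ^ 2 / 2)) = fun t => t * exp (t ^ 2 / 2) := by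
  simpa using deriv_mul_exp_half_sq fun t => hasDerivAt_const t (1 : ℝ)

lemma iteratedDeriv_two_exp_half_sq :
    iteratedDeriv 2 (fun t => exp (t ^ 2 / 2)) = fun t => (t ^ 2 + 1) * exp (t ^ 2 / 2) := by
  rw [iteratedDeriv_succ, iteratedDeriv_one_exp_half_sq,
    deriv_mul_exp_half_sq (p := fun t => t) hasDerivAt_id]
  ext t
  ring

lemma iteratedDeriv_three_exp_half_sq :
    iteratedDeriv 3 (fun t => exp (t ^ 2 / 2)) = fun t => (t ^ 3 + 3 * t) * exp (t ^ 2 / 2) := by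
  rw [iteratedDeriv_succ, iteratedDeriv_two_exp_half_sq,
    deriv_mul_exp_half_sq fun t => (hasDerivAt_pow 2 t).add_const 1]
  ext t
  simp only [Nat.cast_ofNat]
  ring

lemma iteratedDeriv_four_exp_half_sq :
    iteratedDeriv 4 (fun t => exp (t ^ 2 / 2)) =
      fun t => (t ^ 4 + 6 * t ^ 2 + 3) * exp (t ^ 2 / 2) := by
  rw [iteratedDeriv_succ, iteratedDeriv_three_exp_half_sq,
    deriv_mul_exp_half_sq (p := fun t => t ^ 3 + 3 * t)
      fun t => (hasDerivAt_pow 3 t).add ((hasDerivAt_id t).const_mul 3)]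
  ext t
  simp only [Nat.cast_ofNat, mul_one]
  ring

@[simp]
lemma integral_pow_two_gaussianReal : ∫ x, x ^ 2 ∂gaussianReal 0 1 = 1 := by
  simp [integral_pow_gaussianReal_eq_iteratedDeriv, iteratedDeriv_two_exp_half_sq]

@[simp]
lemma integral_pow_three_gaussianReal : ∫ x, x ^ 3 ∂gaussianReal 0 1 = 0 := by
  simp [integral_pow_gaussianReal_eq_iteratedDeriv, iteratedDeriv_three_exp_half_sq]

@[simp]
lemma integral_pow_four_gaussianReal : ∫ x, x ^ 4 ∂gaussianReal 0 1 = 3 := by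
  simp [integral_pow_gaussianReal_eq_iteratedDeriv, iteratedDeriv_four_exp_half_sq]

section Isserlis

lemma mul_mul_mul_eq_multiset_prod {ι M : Type*} [CommMonoid M] (ω : ι → M) (p q r s : ι) :
    ω p * ω q * ω r * ω s = (({p, q, r, s} : Multiset ι).map ω).prod := by
  simp [mul_assoc]

variable {ι : Type*} [Fintype ι] [DecidableEq ι]

lemma Multiset.prod_map_eq_prod_pow_count {M : Type*} [CommMonoid M] (S : Multiset ι)
    (f : ι → M) : (S.map f).prod = ∏ t, f t ^ S.count t := by
  rw [Finset.prod_multiset_map_count]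
  exact Finset.prod_subset (Finset.subset_univ _) fun t _ ht => by
    rw [Multiset.count_eq_zero_of_notMem (by simpa using ht), pow_zero]

lemma integrable_multiset_prod_pi_gaussianReal (S : Multiset ι) :
    Integrable (fun ω : ι → ℝ => (S.map ω).prod) (Measure.pi fun _ => gaussianReal 0 1) := by
  simp_rw [Multiset.prod_map_eq_prod_pow_count]
  exact Integrable.fintype_prod fun t => integrable_pow_gaussianReal 0 1 _

lemma integral_multiset_prod_pi_gaussianReal (S : Multiset ι) :
    ∫ ω : ι → ℝ, (S.map ω).prod ∂(Measure.pi fun _ => gaussianReal 0 1) =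
      ∏ t, ∫ x, x ^ S.count t ∂gaussianReal 0 1 := by
  simp_rw [Multiset.prod_map_eq_prod_pow_count]
  exact integral_fintype_prod_eq_prod (fun t (x : ℝ) => x ^ S.count t)

lemma integrable_mul_mul_mul_pi_gaussianReal (p q r s : ι) :
    Integrable (fun ω : ι → ℝ => ω p * ω q * ω r * ω s)
      (Measure.pi fun _ => gaussianReal 0 1) := by
  simpa only [mul_mul_mul_eq_multiset_prod] using
    integrable_multiset_prod_pi_gaussianReal {p, q, r, s}

theorem isserlis_pi_gaussianReal (p q r s : ι) :
    ∫ ω : ι → ℝ, ω p * ω q * ω r * ω s ∂(Measure.pi fun _ => gaussianReal 0 1) =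
      (if p = q then 1 else 0) * (if r = s then 1 else 0) +
      (if p = r then 1 else 0) * (if q = s then 1 else 0) +
      (if p = s then 1 else 0) * (if q = r then 1 else 0) := by
  simp_rw [mul_mul_mul_eq_multiset_prod, integral_multiset_prod_pi_gaussianReal]
  rw [← Finset.prod_subset (Finset.subset_univ ({p, q, r, s} : Multiset ι).toFinset)
    fun t _ ht => by rw [Multiset.count_eq_zero_of_notMem (by simpa using ht)]; simp]
  -- Each of the 2 ^ 6 equality patterns of the indices fixes the multiplicities, hence the
  -- moments; only `p = q = r = s` is left, as `1 + 1 + 1 = 3`.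
  by_cases p = q <;> by_cases p = r <;> by_cases p = s <;> by_cases q = r <;> by_cases q = s <;>
    by_cases r = s <;> subst_vars <;> simp_all [Multiset.count_cons, Finset.prod_insert, eq_comm]
  norm_num

end Isserlis

section GaussianMatrix

variable {d : ℕ} (A B C : Matrix (Fin d) (Fin d) ℝ) (i i' : Fin d)

lemma rmat_mul_entry_eq_sum (ω : Fin d × Fin d → ℝ) :
    (rmat ω * A * (rmat ω)ᵀ * B * rmat ω * C * (rmat ω)ᵀ) i i' =
      ∑ x : Fin d × Fin d × Fin d × Fin d × Fin d × Fin d, match x with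
        | (a, b, c, e, f, g) =>
          A a b * B c e * C f g * (ω (i, a) * ω (c, b) * ω (e, f) * ω (i', g)) := by
  simp only [Matrix.mul_assoc]
  simp only [mul_apply, transpose_apply, rmat, of_apply, Finset.mul_sum, Fintype.sum_prod_type]
  simp only [mul_assoc, mul_comm, mul_left_comm]

lemma integral_rmat_mul_entry :
    ∫ ω, (rmat ω * A * (rmat ω)ᵀ * B * rmat ω * C * (rmat ω)ᵀ) i i' ∂realGaussianMat d =
      ∑ x : Fin d × Fin d × Fin d × Fin d × Fin d × Fin d, match x with
        | (a, b, c, e, f, g) => A a b * B c e * C f g *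
          ((if (i, a) = (c, b) then 1 else 0) * (if (e, f) = (i', g) then 1 else 0) +
            (if (i, a) = (e, f) then 1 else 0) * (if (c, b) = (i', g) then 1 else 0) +
            (if (i, a) = (i', g) then 1 else 0) * (if (c, b) = (e, f) then 1 else 0)) := by
  simp_rw [rmat_mul_entry_eq_sum]
  rw [integral_finsetSum _ fun ⟨a, b, c, e, f, g⟩ _ =>
    (integrable_mul_mul_mul_pi_gaussianReal (i, a) (c, b) (e, f) (i', g)).const_mul _]
  refine Finset.sum_congr rfl fun ⟨a, b, c, e, f, g⟩ _ => ?_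
  rw [integral_const_mul]
  exact congrArg _ (isserlis_pi_gaussianReal (i, a) (c, b) (e, f) (i', g))

lemma sum_pairing_eq_trace_mul_trace :
    ∑ x : Fin d × Fin d × Fin d × Fin d × Fin d × Fin d, (match x with
      | (a, b, c, e, f, g) => A a b * B c e * C f g *
        ((if (i, a) = (c, b) then 1 else 0) * (if (e, f) = (i', g) then 1 else 0)) : ℝ) =
      A.trace * C.trace * B i i' := by
  rw [trace, trace, Finset.sum_mul_sum, Finset.sum_mul]
  simp [Fintype.sum_prod_type, ite_and, Finset.sum_mul, mul_right_comm]

lemma sum_pairing_eq_trace_mul_trace_mul_one :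
    ∑ x : Fin d × Fin d × Fin d × Fin d × Fin d × Fin d, (match x with
      | (a, b, c, e, f, g) => A a b * B c e * C f g *
        ((if (i, a) = (i', g) then 1 else 0) * (if (c, b) = (e, f) then 1 else 0)) : ℝ) =
      (A * C).trace * B.trace * (1 : Matrix (Fin d) (Fin d) ℝ) i i' := by
  simp only [trace, diag_apply, mul_apply, Finset.sum_mul]
  simp only [Finset.mul_sum]
  simp [Fintype.sum_prod_type, ite_and, one_apply, mul_right_comm]

lemma sum_pairing_eq_trace_mul_transpose :
    ∑ x : Fin d × Fin d × Fin d × Fin d × Fin d × Fin d, (match x with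
      | (a, b, c, e, f, g) => A a b * B c e * C f g *
        ((if (i, a) = (e, f) then 1 else 0) * (if (c, b) = (i', g) then 1 else 0)) : ℝ) =
      (A * Cᵀ).trace * Bᵀ i i' := by
  simp [Fintype.sum_prod_type, ite_and, trace, mul_apply, Finset.sum_mul, mul_right_comm]

end GaussianMatrix

theorem real_gaussian_second_order_expectation_general {d : ℕ}
    (A B C : Matrix (Fin d) (Fin d) ℝ) (i i' : Fin d) :
    ∫ ω : Fin d × Fin d → ℝ,
        (rmat ω * A * (rmat ω)ᵀ * B * rmat ω * C * (rmat ω)ᵀ) i i' ∂(realGaussianMat d)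
      = A.trace * C.trace * B i i' +
          (A * C).trace * B.trace * (1 : Matrix (Fin d) (Fin d) ℝ) i i' +
          (A * Cᵀ).trace * Bᵀ i i' := by
  rw [integral_rmat_mul_entry]
  simp only [mul_add, Finset.sum_add_distrib]
  rw [sum_pairing_eq_trace_mul_trace, sum_pairing_eq_trace_mul_transpose,
    sum_pairing_eq_trace_mul_trace_mul_one]
  ring

/-- For a standard real Gaussian matrix `M` and fixed matrices `A`, `B`, `C`,
`E[M A Mᵀ B M C Mᵀ] = tr A tr C · B + tr(AC) tr B · I + tr(ACᵀ) · Bᵀ`, entrywise. -/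
theorem real_gaussian_second_order_expectation {d : ℕ} (hd : 1 ≤ d)
    (A B C : Matrix (Fin d) (Fin d) ℝ) (i i' : Fin d) :
    ∫ ω : Fin d × Fin d → ℝ,
        (rmat ω * A * (rmat ω)ᵀ * B * rmat ω * C * (rmat ω)ᵀ) i i' ∂(realGaussianMat d)
      = A.trace * C.trace * B i i' +
          (A * C).trace * B.trace * (1 : Matrix (Fin d) (Fin d) ℝ) i i' +
          (A * Cᵀ).trace * Bᵀ i i' :=
  real_gaussian_second_order_expectation_general A B C i i'
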